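/- Let T_n be a strongly connected tournament of order n and irregularity i(T_n), and let v be any vertex of T_n. If i(T_n) = 1, then the number of directed triangles containing v is at least n·(n−2)/8; if i(T_n) ≠ 1, then the number of directed triangles containing v is at least (n−1)·(n+1−2·i(T_n))/8. -/

import Mathlib

open Finset

/-- A tournament on vertex type `V`: between every two distinct vertices there is
exactly one arc, and there are no loops. -/
structure Tournament (V : Type) where
  arc : V → V → Bool
  irrefl : ∀ v, arc v v = false
  oneArc : ∀ u v : V, u ≠ v → arc u v = !arc v u

namespace Tournament

variable {V : Type} [Fintype V]

/-- Outdegree `d⁺(v)`. -/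
def outDeg (T : Tournament V) (v : V) : ℕ :=
  (univ.filter fun w => T.arc v w).card

/-- Indegree `d⁻(v)`. -/
def inDeg (T : Tournament V) (v : V) : ℕ :=
  (univ.filter fun u => T.arc u v).card

/-- `δ(v) = min{d⁺(v), d⁻(v)}`. -/
def minDeg (T : Tournament V) (v : V) : ℕ :=
  min (T.outDeg v) (T.inDeg v)

/-- The irregularity `i(T)`: the maximum of `|d⁺(v) − d⁻(v)|` over all vertices. -/
def irreg (T : Tournament V) : ℕ :=
  univ.sup fun v => ((T.outDeg v : ℤ) - (T.inDeg v : ℤ)).natAbs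

/-- Strong connectivity: every vertex can reach every other vertex by a directed path. -/
def StronglyConnected (T : Tournament V) : Prop :=
  ∀ u v : V, Relation.ReflTransGen (fun a b => T.arc a b) u v

/-- The number of in-arcs of `v` with color `c`. -/
def monoInDeg (T : Tournament V) (C : V → V → ℕ) (v : V) (c : ℕ) : ℕ :=
  (univ.filter fun u => T.arc u v ∧ C u v = c).card

/-- The number of out-arcs of `v` with color `c`. -/
def monoOutDeg (T : Tournament V) (C : V → V → ℕ) (v : V) (c : ℕ) : ℕ :=
  (univ.filter fun w => T.arc v w ∧ C v w = c).card

/-- The maximum monochromatic indegree `Δ^{-mon}(T)`. -/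
def maxMonoIn (T : Tournament V) (C : V → V → ℕ) : ℕ :=
  univ.sup fun v => (univ.image fun u => C u v).sup (T.monoInDeg C v)

/-- The maximum monochromatic outdegree `Δ^{+mon}(T)`. -/
def maxMonoOut (T : Tournament V) (C : V → V → ℕ) : ℕ :=
  univ.sup fun v => (univ.image fun w => C v w).sup (T.monoOutDeg C v)

/-- The directed triangles through `v`, encoded as ordered pairs `(w, u)` with
arcs `v → w → u → v`.  This gives each triangle through `v` exactly once. -/
def trianglesThrough (T : Tournament V) (v : V) : Finset (V × V) :=
  univ.filter fun p => T.arc v p.1 ∧ T.arc p.1 p.2 ∧ T.arc p.2 v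

/-- The rainbow triangles through `v`: all three arcs have pairwise distinct colors. -/
def rainbowTrianglesThrough (T : Tournament V) (C : V → V → ℕ) (v : V) : Finset (V × V) :=
  (T.trianglesThrough v).filter fun p =>
    C v p.1 ≠ C p.1 p.2 ∧ C p.1 p.2 ≠ C p.2 v ∧ C p.2 v ≠ C v p.1

/-- The non-rainbow triangles through `v`: some two arcs share a color. -/
def nonRainbowTrianglesThrough (T : Tournament V) (C : V → V → ℕ) (v : V) : Finset (V × V) :=
  (T.trianglesThrough v).filter fun p =>
    ¬(C v p.1 ≠ C p.1 p.2 ∧ C p.1 p.2 ≠ C p.2 v ∧ C p.2 v ≠ C v p.1)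

/-- Ordered triples `(x, y, z)` with arcs `x → y → z → x`.  Each directed triangle
is counted exactly three times (once per cyclic rotation). -/
def triangleTriples (T : Tournament V) : Finset (V × V × V) :=
  univ.filter fun p => T.arc p.1 p.2.1 ∧ T.arc p.2.1 p.2.2 ∧ T.arc p.2.2 p.1

/-- Ordered triples representing rainbow triangles (each rainbow triangle thrice). -/
def rainbowTriples (T : Tournament V) (C : V → V → ℕ) : Finset (V × V × V) :=
  T.triangleTriples.filter fun p =>
    C p.1 p.2.1 ≠ C p.2.1 p.2.2 ∧ C p.2.1 p.2.2 ≠ C p.2.2 p.1 ∧ C p.2.2 p.1 ≠ C p.1 p.2.1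

/-- Ordered triples representing non-rainbow triangles (each such triangle thrice). -/
def nonRainbowTriples (T : Tournament V) (C : V → V → ℕ) : Finset (V × V × V) :=
  T.triangleTriples.filter fun p =>
    ¬(C p.1 p.2.1 ≠ C p.2.1 p.2.2 ∧ C p.2.1 p.2.2 ≠ C p.2.2 p.1 ∧ C p.2.2 p.1 ≠ C p.1 p.2.1)

end Tournament

/-!
Let `t` be the number of triangles through `v`, `A` the out-neighbourhood of `v` and `a = #A`.
Every vertex has outdegree at least `(n - 1 - i) / 2`. The out-arcs of the vertices of `A` either
stay inside `A`, which accounts for `a (a - 1) / 2` of them, or end at an in-neighbour of `v` and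
close a triangle, so `2 t ≥ a (n - a - i)`. Reversing all arcs gives the same bound for the
indegree, hence for `d = min (d⁺ v) (d⁻ v)`, and `n - 1 - i ≤ 2 d ≤ n - 1`. Minimising
`4 d (n - d - i)` over this range gives `n (n - 2)` when `i = 1` and `(n - 1) (n + 1 - 2 i)`
otherwise.
-/

namespace Tournament

variable {V : Type} (T : Tournament V)

lemma ne_of_arc {u w : V} (h : T.arc u w) : u ≠ w := by
  rintro rfl
  simp [T.irrefl] at h

lemma arc_eq_false_of_arc {u w : V} (h : T.arc u w) : T.arc w u = false := by
  rw [T.oneArc w u (T.ne_of_arc h).symm, h]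
  rfl

lemma arc_iff_not_arc {u w : V} (h : u ≠ w) : T.arc u w ↔ ¬ T.arc w u := by
  rw [T.oneArc u w h]
  cases T.arc w u <;> simp

lemma ite_arc_add_ite_arc_add_ite_eq [DecidableEq V] (w u : V) :
    ((if T.arc w u then 1 else 0) + (if T.arc u w then 1 else 0) + (if u = w then 1 else 0) : ℕ)
      = 1 := by
  by_cases huw : u = w
  · subst huw
    simp [T.irrefl]
  · cases h : T.arc u w <;> simp [T.oneArc w u (Ne.symm huw), h, huw]

def rev : Tournament V where
  arc u w := T.arc w u
  irrefl w := T.irrefl w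
  oneArc u w h := T.oneArc w u (Ne.symm h)

theorem two_mul_sum_card_arc_within_add_card [DecidableEq V] (s : Finset V) :
    2 * ∑ w ∈ s, #{u ∈ s | T.arc w u} + #s = #s * #s := by
  have hsum : ∑ w ∈ s, ∑ u ∈ s, ((if T.arc w u then 1 else 0) + (if T.arc u w then 1 else 0)
      + (if u = w then 1 else 0) : ℕ) = #s * #s := by
    simp [T.ite_arc_add_ite_arc_add_ite_eq]
  simp only [Finset.sum_add_distrib, Finset.sum_ite_eq'] at hsum
  rw [Finset.sum_comm (f := fun w u => if T.arc u w then 1 else 0)] at hsum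
  simp only [Finset.sum_boole, Nat.cast_id] at hsum
  simpa [two_mul] using hsum

variable [Fintype V]

theorem outDeg_add_inDeg (w : V) : T.outDeg w + T.inDeg w + 1 = Fintype.card V := by
  classical
  have hsum := Finset.sum_congr rfl fun u (_ : u ∈ univ) => T.ite_arc_add_ite_arc_add_ite_eq w u
  simp only [Finset.sum_add_distrib, Finset.sum_ite_eq', Finset.mem_univ, if_true,
    ← Finset.card_filter, Finset.sum_const, smul_eq_mul, mul_one] at hsum
  exact hsum

lemma natAbs_outDeg_sub_inDeg_le_irreg (w : V) :
    ((T.outDeg w : ℤ) - T.inDeg w).natAbs ≤ T.irreg :=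
  le_sup (f := fun u => ((T.outDeg u : ℤ) - T.inDeg u).natAbs) (mem_univ w)

lemma card_sub_one_sub_irreg_le_two_mul_outDeg (w : V) :
    (Fintype.card V : ℤ) - 1 - T.irreg ≤ 2 * T.outDeg w := by
  have := T.outDeg_add_inDeg w
  have := T.natAbs_outDeg_sub_inDeg_le_irreg w
  omega

def outNbhd (v : V) : Finset V :=
  univ.filter fun w => T.arc v w

lemma card_outNbhd (v : V) : #(T.outNbhd v) = T.outDeg v := rfl

/-- An out-neighbour `w` of `v` never beats `v`, so each of its out-neighbours either is an
out-neighbour of `v` or closes a triangle `v → w → u → v`. -/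
lemma outDeg_eq_of_arc {v w : V} (hvw : T.arc v w) :
    T.outDeg w = #{u ∈ T.outNbhd v | T.arc w u} + #{u | T.arc w u ∧ T.arc u v} := by
  classical
  rw [outDeg, ← Finset.card_filter_add_card_filter_not (fun u => T.arc v u),
    Finset.filter_filter, Finset.filter_filter, outNbhd, Finset.filter_filter]
  congr 2 <;> ext u <;> simp only [Finset.mem_filter, Finset.mem_univ, true_and]
  · exact and_comm
  · refine and_congr_right fun hwu => ?_
    have huv : u ≠ v := by
      rintro rfl
      simp [T.arc_eq_false_of_arc hvw] at hwu
    exact (T.arc_iff_not_arc huv).symm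

lemma card_trianglesThrough (v : V) :
    #(T.trianglesThrough v) = ∑ w ∈ T.outNbhd v, #{u | T.arc w u ∧ T.arc u v} := by
  classical
  rw [trianglesThrough, Finset.card_filter, Fintype.sum_prod_type, outNbhd, Finset.sum_filter]
  refine Finset.sum_congr rfl fun w _ => ?_
  by_cases hvw : T.arc v w <;> simp only [hvw, true_and, false_and, Finset.card_filter, if_true,
    Finset.sum_const_zero, Bool.false_eq_true, if_false]

theorem outDeg_mul_le_two_mul_card_trianglesThrough (v : V) :
    (T.outDeg v : ℤ) * (Fintype.card V - T.outDeg v - T.irreg) ≤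
      2 * #(T.trianglesThrough v) := by
  classical
  set A := T.outNbhd v
  have hsplit : ∑ w ∈ A, T.outDeg w
      = #(T.trianglesThrough v) + ∑ w ∈ A, #{u ∈ A | T.arc w u} := by
    rw [T.card_trianglesThrough, add_comm, ← Finset.sum_add_distrib]
    exact Finset.sum_congr rfl fun w hw => T.outDeg_eq_of_arc (by simpa [A, outNbhd] using hw)
  have hwithin := T.two_mul_sum_card_arc_within_add_card A
  have hdeg : #A • ((Fintype.card V : ℤ) - 1 - T.irreg) ≤ ∑ w ∈ A, 2 * (T.outDeg w : ℤ) :=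
    Finset.card_nsmul_le_sum _ _ _ fun w _ => T.card_sub_one_sub_irreg_le_two_mul_outDeg w
  rw [nsmul_eq_mul, ← Finset.mul_sum] at hdeg
  rw [← T.card_outNbhd]
  have hsplit' := congrArg (Nat.cast : ℕ → ℤ) hsplit
  have hwithin' := congrArg (Nat.cast : ℕ → ℤ) hwithin
  push_cast at hsplit' hwithin'
  linarith

lemma outDeg_rev (w : V) : T.rev.outDeg w = T.inDeg w := rfl

lemma inDeg_rev (w : V) : T.rev.inDeg w = T.outDeg w := rfl

lemma irreg_rev : T.rev.irreg = T.irreg := by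
  refine Finset.sup_congr rfl fun w _ => ?_
  rw [outDeg_rev, inDeg_rev]
  omega

lemma card_trianglesThrough_rev (v : V) :
    #(T.rev.trianglesThrough v) = #(T.trianglesThrough v) := by
  refine Finset.card_nbij' Prod.swap Prod.swap ?_ ?_ (fun p _ => p.swap_swap)
    (fun p _ => p.swap_swap) <;>
  · intro p hp
    simp only [trianglesThrough, Finset.mem_coe, Finset.mem_filter, Finset.mem_univ,
      true_and, Prod.fst_swap, Prod.snd_swap] at hp ⊢
    simp only [rev] at hp ⊢
    tauto

theorem inDeg_mul_le_two_mul_card_trianglesThrough (v : V) :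
    (T.inDeg v : ℤ) * (Fintype.card V - T.inDeg v - T.irreg) ≤
      2 * #(T.trianglesThrough v) := by
  simpa only [outDeg_rev, irreg_rev, card_trianglesThrough_rev]
    using T.rev.outDeg_mul_le_two_mul_card_trianglesThrough v

theorem minDeg_mul_le_two_mul_card_trianglesThrough (v : V) :
    (T.minDeg v : ℤ) * (Fintype.card V - T.minDeg v - T.irreg) ≤
      2 * #(T.trianglesThrough v) := by
  rcases min_choice (T.outDeg v) (T.inDeg v) with h | h <;> rw [minDeg, h]
  · exact T.outDeg_mul_le_two_mul_card_trianglesThrough v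
  · exact T.inDeg_mul_le_two_mul_card_trianglesThrough v

lemma card_sub_one_sub_irreg_le_two_mul_minDeg (v : V) :
    (Fintype.card V : ℤ) - 1 - T.irreg ≤ 2 * T.minDeg v := by
  have := T.outDeg_add_inDeg v
  have := T.natAbs_outDeg_sub_inDeg_le_irreg v
  rw [minDeg]
  omega

lemma two_mul_minDeg_add_one_le (v : V) : 2 * T.minDeg v + 1 ≤ Fintype.card V := by
  have := T.outDeg_add_inDeg v
  rw [minDeg]
  omega

end Tournament

lemma mul_sub_two_le_four_mul {n d : ℤ} (hlo : n - 2 ≤ 2 * d) (hhi : 2 * d ≤ n - 1) :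
    n * (n - 2) ≤ 4 * (d * (n - d - 1)) := by
  nlinarith [mul_nonneg (sub_nonneg.2 hlo) (sub_nonneg.2 hhi)]

/-- For `i ≥ 2` the difference of the two sides is `(n - 1 - 2d) (2d - (n + 1 - 2i)) ≥ 0`. -/
lemma sub_one_mul_le_four_mul {n d i : ℤ} (hi : i = 0 ∨ 2 ≤ i) (hlo : n - 1 - i ≤ 2 * d)
    (hhi : 2 * d ≤ n - 1) :
    (n - 1) * (n + 1 - 2 * i) ≤ 4 * (d * (n - d - i)) := by
  rcases hi with rfl | hi
  · nlinarith
  · nlinarith [mul_nonneg (sub_nonneg.2 hhi) (show 0 ≤ 2 * d - (n + 1 - 2 * i) by linarith)]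

theorem triangles_through_vertex_lower_bound_uniform_general
    {V : Type} [Fintype V] (n : ℕ) (hn : Fintype.card V = n)
    (T : Tournament V)
    (v : V) :
    (T.irreg = 1 →
      ((T.trianglesThrough v).card : ℚ) ≥ (n : ℚ) * ((n : ℚ) - 2) / 8) ∧
    (T.irreg ≠ 1 →
      ((T.trianglesThrough v).card : ℚ) ≥
        ((n : ℚ) - 1) * ((n : ℚ) + 1 - 2 * (T.irreg : ℚ)) / 8) := by
  subst hn
  have htri := T.minDeg_mul_le_two_mul_card_trianglesThrough v
  have hlo := T.card_sub_one_sub_irreg_le_two_mul_minDeg v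
  have hhi : 2 * (T.minDeg v : ℤ) ≤ Fintype.card V - 1 := by
    have := T.two_mul_minDeg_add_one_le v
    omega
  constructor
  · intro hi
    rw [hi, Nat.cast_one] at htri hlo
    have key := mul_sub_two_le_four_mul (by linarith) hhi
    rw [ge_iff_le, div_le_iff₀ (by norm_num)]
    exact_mod_cast (by linarith : (Fintype.card V : ℤ) * (Fintype.card V - 2) ≤
      #(T.trianglesThrough v) * 8)
  · intro hi
    have key := sub_one_mul_le_four_mul (by omega) hlo hhi
    rw [ge_iff_le, div_le_iff₀ (by norm_num)]
    exact_mod_cast (by linarith : ((Fintype.card V : ℤ) - 1) *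
      (Fintype.card V + 1 - 2 * T.irreg) ≤ #(T.trianglesThrough v) * 8)

/-- Claim 1: In a strongly connected tournament of order `n`, for any
vertex `v`: if `i(T) = 1` then `v` lies on at least `n(n−2)/8` directed triangles,
and if `i(T) ≠ 1` then `v` lies on at least `(n−1)(n+1−2 i(T))/8` directed triangles. -/
theorem triangles_through_vertex_lower_bound_uniform
    {V : Type} [Fintype V] (n : ℕ) (hn : Fintype.card V = n)
    (T : Tournament V)
    (hsc : T.StronglyConnected)
    (v : V) :
    (T.irreg = 1 →
      ((T.trianglesThrough v).card : ℚ) ≥ (n : ℚ) * ((n : ℚ) - 2) / 8) ∧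
    (T.irreg ≠ 1 →
      ((T.trianglesThrough v).card : ℚ) ≥
        ((n : ℚ) - 1) * ((n : ℚ) + 1 - 2 * (T.irreg : ℚ)) / 8) :=
  triangles_through_vertex_lower_bound_uniform_general n hn T v
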